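/- arXiv:1905.08946 — 4 statements merged into one kernel-verified Lean document; each statement's English description precedes it below -/
import Mathlib

section
/- (Sufficient decrease for the A2 step.) Let x₀, x₁ ∈ ℝ^n be nonzero vectors, β > 0, and set α₀ = ‖x₀‖₁/‖x₀‖₂ and α₁ = ‖x₁‖₁/‖x₁‖₂. If x₁ satisfies the subproblem comparison inequality ‖x₁‖₁ − ⟨x₁, α₀·x₀/‖x₀‖₂⟩ + (β/2)‖x₁ − x₀‖₂² ≤ ‖x₀‖₁ − ⟨x₀, α₀·x₀/‖x₀‖₂⟩, then α₀ − α₁ ≥ (β/(2‖x₁‖₂))·‖x₁ − x₀‖₂². -/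
open scoped RealInnerProductSpace

/-- sufficient decrease for the A2 step. -/
theorem stmt_3 {n : ℕ} (x₀ x₁ : EuclideanSpace ℝ (Fin n))
    (hx₀ : x₀ ≠ 0) (hx₁ : x₁ ≠ 0) (β : ℝ) (hβ : 0 < β)
    (α₀ α₁ : ℝ)
    (hα₀ : α₀ = (∑ i, |x₀ i|) / ‖x₀‖)
    (hα₁ : α₁ = (∑ i, |x₁ i|) / ‖x₁‖)
    (hstep : (∑ i, |x₁ i|) - ⟪x₁, (α₀ / ‖x₀‖) • x₀⟫ + β / 2 * ‖x₁ - x₀‖ ^ 2 ≤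
      (∑ i, |x₀ i|) - ⟪x₀, (α₀ / ‖x₀‖) • x₀⟫) :
    α₀ - α₁ ≥ β / (2 * ‖x₁‖) * ‖x₁ - x₀‖ ^ 2 := by
  have hn0 : (0:ℝ) < ‖x₀‖ := norm_pos_iff.mpr hx₀
  have hn1 : (0:ℝ) < ‖x₁‖ := norm_pos_iff.mpr hx₁
  have hs0 : (0:ℝ) ≤ ∑ i, |x₀ i| := Finset.sum_nonneg (fun i _ => abs_nonneg _)
  have hα0nn : 0 ≤ α₀ := by rw [hα₀]; positivity
  have hi0 : ⟪x₀, (α₀ / ‖x₀‖) • x₀⟫ = ∑ i, |x₀ i| := by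
    rw [real_inner_smul_right, real_inner_self_eq_norm_sq, hα₀]
    field_simp
  have hi1 : ⟪x₁, (α₀ / ‖x₀‖) • x₀⟫ ≤ α₀ * ‖x₁‖ := by
    rw [real_inner_smul_right]
    calc α₀ / ‖x₀‖ * ⟪x₁, x₀⟫ ≤ α₀ / ‖x₀‖ * (‖x₁‖ * ‖x₀‖) :=
          mul_le_mul_of_nonneg_left (real_inner_le_norm _ _) (by positivity)
      _ = α₀ * ‖x₁‖ := by field_simp
  have hs1 : (∑ i, |x₁ i|) = α₁ * ‖x₁‖ := by rw [hα₁]; field_simp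
  have key : α₁ * ‖x₁‖ + β / 2 * ‖x₁ - x₀‖ ^ 2 ≤ α₀ * ‖x₁‖ := by
    rw [hi0, hs1] at hstep
    linarith
  rw [ge_iff_le, div_mul_eq_mul_div, div_le_iff₀ (by positivity)]
  nlinarith
end

section
/- (Decrease of α in one A1 step.) Let x₀, x₁ ∈ ℝ^n be nonzero, set α₀ = ‖x₀‖₁/‖x₀‖₂, and suppose ‖x₁‖₁ − ⟨x₁, α₀·x₀/‖x₀‖₂⟩ ≤ ‖x₀‖₁ − ⟨x₀, α₀·x₀/‖x₀‖₂⟩ (the right-hand side equals 0). Then ‖x₁‖₁ ≤ α₀‖x₁‖₂, i.e. ‖x₁‖₁/‖x₁‖₂ ≤ ‖x₀‖₁/‖x₀‖₂. -/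
open scoped RealInnerProductSpace

/-- decrease of `α` in one A1 step. -/
theorem stmt_11 {n : ℕ} (x₀ x₁ : EuclideanSpace ℝ (Fin n))
    (hx₀ : x₀ ≠ 0) (hx₁ : x₁ ≠ 0)
    (α₀ : ℝ) (hα₀ : α₀ = (∑ i, |x₀ i|) / ‖x₀‖)
    (hstep : (∑ i, |x₁ i|) - ⟪x₁, (α₀ / ‖x₀‖) • x₀⟫ ≤
      (∑ i, |x₀ i|) - ⟪x₀, (α₀ / ‖x₀‖) • x₀⟫) :
    (∑ i, |x₁ i|) ≤ α₀ * ‖x₁‖ ∧ (∑ i, |x₁ i|) / ‖x₁‖ ≤ (∑ i, |x₀ i|) / ‖x₀‖ := by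
  have h0 : (0:ℝ) < ‖x₀‖ := norm_pos_iff.mpr hx₀
  have h1 : (0:ℝ) < ‖x₁‖ := norm_pos_iff.mpr hx₁
  have hα0 : 0 ≤ α₀ := by
    rw [hα₀]
    exact div_nonneg (Finset.sum_nonneg fun i _ => abs_nonneg _) h0.le
  have hinner0 : ⟪x₀, (α₀ / ‖x₀‖) • x₀⟫ = ∑ i, |x₀ i| := by
    rw [real_inner_smul_right, real_inner_self_eq_norm_sq, hα₀, sq]
    field_simp
  have hCS : ⟪x₁, (α₀ / ‖x₀‖) • x₀⟫ ≤ α₀ * ‖x₁‖ := by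
    rw [real_inner_smul_right]
    have := real_inner_le_norm x₁ x₀
    calc α₀ / ‖x₀‖ * ⟪x₁, x₀⟫ ≤ α₀ / ‖x₀‖ * (‖x₁‖ * ‖x₀‖) := by
          exact mul_le_mul_of_nonneg_left this (div_nonneg hα0 h0.le)
      _ = α₀ * ‖x₁‖ := by field_simp
  have key : (∑ i, |x₁ i|) ≤ α₀ * ‖x₁‖ := by
    have : (∑ i, |x₁ i|) ≤ ⟪x₁, (α₀ / ‖x₀‖) • x₀⟫ := by
      rw [hinner0] at hstep; linarith
    linarith
  refine ⟨key, ?_⟩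
  rw [← hα₀]
  exact (div_le_iff₀ h1).mpr (by linarith [key])
end

section
/- (Convergence of α for L₁/L₂-A1.) Let (x_k)_{k≥0} be a sequence of nonzero vectors in ℝ^n and set α_k = ‖x_k‖₁/‖x_k‖₂. Suppose that for every k, ‖x_{k+1}‖₁ − ⟨x_{k+1}, α_k·x_k/‖x_k‖₂⟩ ≤ 0. Then the sequence (α_k) is nonincreasing, and since each α_k lies in the interval [1, √n], it converges to some limit α* ∈ [1, √n]. -/
open scoped RealInnerProductSpace

lemma aux_norm_le_sum {n : ℕ} (y : EuclideanSpace ℝ (Fin n)) :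
    ‖y‖ ≤ ∑ i, |y i| := by
  rw [EuclideanSpace.norm_eq]
  have h1 : ∑ i, ‖y i‖ ^ 2 ≤ (∑ i, |y i|) ^ 2 := by
    simp only [Real.norm_eq_abs]
    exact Finset.sum_sq_le_sq_sum_of_nonneg (fun i _ => abs_nonneg _)
  calc Real.sqrt (∑ i, ‖y i‖ ^ 2) ≤ Real.sqrt ((∑ i, |y i|) ^ 2) :=
        Real.sqrt_le_sqrt h1
    _ = ∑ i, |y i| := Real.sqrt_sq (Finset.sum_nonneg fun i _ => abs_nonneg _)

lemma aux_sum_le_sqrt {n : ℕ} (y : EuclideanSpace ℝ (Fin n)) :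
    ∑ i, |y i| ≤ Real.sqrt n * ‖y‖ := by
  have h := Finset.sum_mul_sq_le_sq_mul_sq Finset.univ (fun _ => (1:ℝ)) (fun i => |y i|)
  simp only [one_mul, one_pow, Finset.sum_const, Finset.card_univ, Fintype.card_fin,
    nsmul_eq_mul, mul_one] at h
  have hnn : (0:ℝ) ≤ ∑ i, |y i| := Finset.sum_nonneg fun i _ => abs_nonneg _
  have h2 : (∑ i, |y i|) ^ 2 ≤ (Real.sqrt n * ‖y‖) ^ 2 := by
    rw [mul_pow, Real.sq_sqrt (Nat.cast_nonneg n), EuclideanSpace.norm_eq,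
      Real.sq_sqrt (Finset.sum_nonneg fun i _ => sq_nonneg _)]
    simpa [Real.norm_eq_abs] using h
  have hpos : 0 ≤ Real.sqrt n * ‖y‖ := by positivity
  calc ∑ i, |y i| = Real.sqrt ((∑ i, |y i|) ^ 2) := (Real.sqrt_sq hnn).symm
    _ ≤ Real.sqrt ((Real.sqrt n * ‖y‖) ^ 2) := Real.sqrt_le_sqrt h2
    _ = Real.sqrt n * ‖y‖ := Real.sqrt_sq hpos

/-- convergence of `α` for the L₁/L₂-A1 scheme: the sequence
`α_k = ‖x_k‖₁/‖x_k‖₂` is nonincreasing, lies in `[1, √n]`, and converges. -/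
theorem stmt_12 {n : ℕ} (x : ℕ → EuclideanSpace ℝ (Fin n))
    (hx : ∀ k, x k ≠ 0)
    (α : ℕ → ℝ) (hα : ∀ k, α k = (∑ i, |x k i|) / ‖x k‖)
    (hstep : ∀ k, (∑ i, |x (k + 1) i|) -
      ⟪x (k + 1), (α k / ‖x k‖) • x k⟫ ≤ 0) :
    Antitone α ∧ (∀ k, α k ∈ Set.Icc 1 (Real.sqrt n)) ∧
      ∃ αstar ∈ Set.Icc 1 (Real.sqrt n), Filter.Tendsto α Filter.atTop (nhds αstar) := by
  have hxpos : ∀ k, 0 < ‖x k‖ := fun k => norm_pos_iff.mpr (hx k)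
  have hmem : ∀ k, α k ∈ Set.Icc 1 (Real.sqrt n) := by
    intro k
    rw [hα k]
    constructor
    · rw [le_div_iff₀ (hxpos k), one_mul]
      exact aux_norm_le_sum (x k)
    · rw [div_le_iff₀ (hxpos k)]
      exact aux_sum_le_sqrt (x k)
  have hanti : Antitone α := by
    apply antitone_nat_of_succ_le
    intro k
    have h := hstep k
    have hαnn : 0 ≤ α k := le_trans zero_le_one (hmem k).1
    have hcs : ⟪x (k + 1), (α k / ‖x k‖) • x k⟫ ≤ α k * ‖x (k + 1)‖ := by
      rw [real_inner_smul_right]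
      have := real_inner_le_norm (x (k + 1)) (x k)
      calc α k / ‖x k‖ * ⟪x (k + 1), x k⟫
          ≤ α k / ‖x k‖ * (‖x (k + 1)‖ * ‖x k‖) := by
            apply mul_le_mul_of_nonneg_left this
            positivity
        _ = α k * ‖x (k + 1)‖ := by
            rw [mul_comm ‖x (k + 1)‖ ‖x k‖, ← mul_assoc,
              div_mul_cancel₀ _ (hxpos k).ne']
    have hsum : (∑ i, |x (k + 1) i|) ≤ α k * ‖x (k + 1)‖ := by linarith
    rw [hα (k + 1), div_le_iff₀ (hxpos (k + 1))]
    exact hsum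
  refine ⟨hanti, hmem, ⨅ k, α k, ?_, ?_⟩
  · constructor
    · exact le_ciInf fun k => (hmem k).1
    · exact le_trans (ciInf_le ⟨1, fun y ⟨k, hk⟩ => hk ▸ (hmem k).1⟩ 0) (hmem 0).2
  · exact tendsto_atTop_ciInf hanti ⟨1, fun y ⟨k, hk⟩ => hk ▸ (hmem k).1⟩
end

section
/- (Core convergence properties of L₁/L₂-A2.) Let β > 0 and let (x_k)_{k≥0} be a sequence of nonzero vectors in ℝ^n with α_k = ‖x_k‖₁/‖x_k‖₂, such that for every k the A2 step inequality holds: ‖x_{k+1}‖₁ − ⟨x_{k+1}, α_k·x_k/‖x_k‖₂⟩ + (β/2)‖x_{k+1} − x_k‖₂² ≤ ‖x_k‖₁ − ⟨x_k, α_k·x_k/‖x_k‖₂⟩. If the sequence (x_k) is bounded in Euclidean norm, then (α_k) is nonincreasing and converges to some α* ≥ 1, and ‖x_{k+1} − x_k‖₂ → 0 as k → ∞. -/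
open scoped RealInnerProductSpace
open Filter

/-- core convergence properties of L₁/L₂-A2: if the iterates are
bounded, then `α_k = ‖x_k‖₁/‖x_k‖₂` is nonincreasing and converges to some
`α* ≥ 1`, and `‖x_{k+1} - x_k‖ → 0`. -/
theorem stmt_13 {n : ℕ} (β : ℝ) (hβ : 0 < β)
    (x : ℕ → EuclideanSpace ℝ (Fin n)) (hx : ∀ k, x k ≠ 0)
    (α : ℕ → ℝ) (hα : ∀ k, α k = (∑ i, |x k i|) / ‖x k‖)
    (hstep : ∀ k, (∑ i, |x (k + 1) i|) - ⟪x (k + 1), (α k / ‖x k‖) • x k⟫ +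
        β / 2 * ‖x (k + 1) - x k‖ ^ 2 ≤
      (∑ i, |x k i|) - ⟪x k, (α k / ‖x k‖) • x k⟫)
    (hbdd : ∃ C : ℝ, ∀ k, ‖x k‖ ≤ C) :
    Antitone α ∧
      (∃ αstar : ℝ, 1 ≤ αstar ∧ Filter.Tendsto α Filter.atTop (nhds αstar)) ∧
      Filter.Tendsto (fun k => ‖x (k + 1) - x k‖) Filter.atTop (nhds 0) := by
  classical
  obtain ⟨C, hC⟩ := hbdd
  have hnorm_pos : ∀ k, (0:ℝ) < ‖x k‖ := fun k => norm_pos_iff.mpr (hx k)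
  have hCpos : 0 < C := lt_of_lt_of_le (hnorm_pos 0) (hC 0)
  have hl1 : ∀ k, ‖x k‖ ≤ ∑ i, |x k i| := by
    intro k
    rw [EuclideanSpace.norm_eq]
    have h1 : ∑ i, ‖x k i‖ ^ 2 ≤ (∑ i, |x k i|) ^ 2 := by
      simp only [Real.norm_eq_abs]
      exact Finset.sum_sq_le_sq_sum_of_nonneg (fun i _ => abs_nonneg _)
    calc Real.sqrt (∑ i, ‖x k i‖ ^ 2) ≤ Real.sqrt ((∑ i, |x k i|) ^ 2) :=
          Real.sqrt_le_sqrt h1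
      _ = ∑ i, |x k i| := Real.sqrt_sq (Finset.sum_nonneg fun i _ => abs_nonneg _)
  have hα1 : ∀ k, 1 ≤ α k := by
    intro k
    rw [hα k, le_div_iff₀ (hnorm_pos k)]
    simpa using hl1 k
  -- key inequality: β * ‖d_k‖² ≤ (α k - α (k+1)) * (2*C), and monotonicity
  have key : ∀ k, α (k + 1) ≤ α k ∧
      β * ‖x (k + 1) - x k‖ ^ 2 ≤ (α k - α (k + 1)) * (2 * C) := by
    intro k
    have h := hstep k
    have hinner1 : ⟪x k, (α k / ‖x k‖) • x k⟫ = α k * ‖x k‖ := by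
      rw [real_inner_smul_right, real_inner_self_eq_norm_sq, sq]
      field_simp [ne_of_gt (hnorm_pos k)]
    have hRHS : (∑ i, |x k i|) - ⟪x k, (α k / ‖x k‖) • x k⟫ = 0 := by
      rw [hinner1, hα k, div_mul_cancel₀ _ (ne_of_gt (hnorm_pos k)), sub_self]
    have hαnn : 0 ≤ α k / ‖x k‖ :=
      div_nonneg (le_trans zero_le_one (hα1 k)) (hnorm_pos k).le
    have hinner2 : ⟪x (k + 1), (α k / ‖x k‖) • x k⟫ ≤ α k * ‖x (k + 1)‖ := by
      rw [real_inner_smul_right]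
      calc α k / ‖x k‖ * ⟪x (k + 1), x k⟫
          ≤ α k / ‖x k‖ * (‖x (k + 1)‖ * ‖x k‖) :=
            mul_le_mul_of_nonneg_left (real_inner_le_norm _ _) hαnn
        _ = α k * ‖x (k + 1)‖ := by
            field_simp [ne_of_gt (hnorm_pos k)]
    have h2 : (∑ i, |x (k + 1) i|) - α k * ‖x (k + 1)‖
        + β / 2 * ‖x (k + 1) - x k‖ ^ 2 ≤ 0 := by linarith
    have e1 : α (k + 1) * ‖x (k + 1)‖ = ∑ i, |x (k + 1) i| := by
      rw [hα (k + 1), div_mul_cancel₀ _ (ne_of_gt (hnorm_pos (k + 1)))]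
    have hN := hnorm_pos (k + 1)
    have hD : (0:ℝ) ≤ ‖x (k + 1) - x k‖ ^ 2 := sq_nonneg _
    -- polynomial form: α(k+1)*N + (β/2)*D ≤ α k * N
    have h3 : α (k + 1) * ‖x (k + 1)‖ + β / 2 * ‖x (k + 1) - x k‖ ^ 2
        ≤ α k * ‖x (k + 1)‖ := by linarith
    have hmono : α (k + 1) ≤ α k := by nlinarith [mul_nonneg hβ.le hD]
    refine ⟨hmono, ?_⟩
    have hsub : 0 ≤ α k - α (k + 1) := by linarith
    have h4 : (α k - α (k + 1)) * ‖x (k + 1)‖ ≤ (α k - α (k + 1)) * C :=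
      mul_le_mul_of_nonneg_left (hC (k + 1)) hsub
    nlinarith
  have hanti : Antitone α := antitone_nat_of_succ_le fun k => (key k).1
  have hbb : BddBelow (Set.range α) := ⟨1, by rintro y ⟨k, rfl⟩; exact hα1 k⟩
  have hconv : Tendsto α atTop (nhds (⨅ k, α k)) := tendsto_atTop_ciInf hanti hbb
  refine ⟨hanti, ⟨⨅ k, α k, le_ciInf hα1, hconv⟩, ?_⟩
  have hshift : Tendsto (fun k => α (k + 1)) atTop (nhds (⨅ k, α k)) :=
    hconv.comp (tendsto_add_atTop_nat 1)
  have hdiff : Tendsto (fun k => α k - α (k + 1)) atTop (nhds 0) := by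
    simpa using hconv.sub hshift
  have hub : Tendsto (fun k => 2 * C / β * (α k - α (k + 1))) atTop (nhds 0) := by
    simpa using hdiff.const_mul (2 * C / β)
  have hsq : Tendsto (fun k => ‖x (k + 1) - x k‖ ^ 2) atTop (nhds 0) := by
    refine squeeze_zero (fun k => sq_nonneg _) (fun k => ?_) hub
    rw [div_mul_eq_mul_div, le_div_iff₀ hβ]
    have := (key k).2
    nlinarith
  have hfin : Tendsto (fun k => Real.sqrt (‖x (k + 1) - x k‖ ^ 2)) atTop
      (nhds (Real.sqrt 0)) := (Real.continuous_sqrt.tendsto 0).comp hsq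
  simpa [Real.sqrt_sq (norm_nonneg _)] using hfin
end
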